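/- arXiv:1712.02076 — 3 statements merged into one kernel-verified Lean document; each statement's English description precedes it below -/
import Mathlib

section
/- Let A be the random walk matrix of an undirected capacitated graph G (so A_{xy} = c(x,y)/d_x for edges (x,y) and 0 otherwise), and let v ∈ ℝ^n be a nonnegative row vector. Define M = row-norm[(v * A)^T], where (v*A)_{xy} = v_x A_{xy}, and row-norm normalizes each nonzero row to sum to 1 (replacing zero rows by the uniform distribution over neighbors). Then M is right stochastic, M respects G (M_{xy} ≠ 0 only if (x,y) ∈ E), and vAM = v. -/
open Matrix Classical

noncomputable def deg {n : ℕ} (c : Fin n → Fin n → ℝ) (x : Fin n) : ℝ := ∑ y, c x y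

noncomputable def rwMatrix {n : ℕ} (c : Fin n → Fin n → ℝ) : Matrix (Fin n) (Fin n) ℝ :=
  Matrix.of fun x y => c x y / deg c x

noncomputable def pointMul {n : ℕ} (v : Fin n → ℝ) (M : Matrix (Fin n) (Fin n) ℝ) :
    Matrix (Fin n) (Fin n) ℝ :=
  Matrix.of fun x y => v x * M x y

/-- row-norm: normalize each nonzero row to sum 1; replace zero rows by the uniform
distribution over the neighbors of the corresponding vertex. -/
noncomputable def rowNorm {n : ℕ} (c : Fin n → Fin n → ℝ) (M : Matrix (Fin n) (Fin n) ℝ) :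
    Matrix (Fin n) (Fin n) ℝ :=
  Matrix.of fun x y =>
    if (∑ z, M x z) ≠ 0 then M x y / ∑ z, M x z
    else if 0 < c x y then (1 : ℝ) / ((Finset.univ.filter (fun z => 0 < c x z)).card : ℝ)
    else 0

def RightStochastic {n : ℕ} (M : Matrix (Fin n) (Fin n) ℝ) : Prop :=
  (∀ x y, 0 ≤ M x y) ∧ ∀ x, ∑ y, M x y = 1

def Respects {n : ℕ} (c : Fin n → Fin n → ℝ) (M : Matrix (Fin n) (Fin n) ℝ) : Prop :=
  ∀ x y, M x y ≠ 0 → 0 < c x y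

theorem stmt0 {n : ℕ} (c : Fin n → Fin n → ℝ)
    (hsym : ∀ x y, c x y = c y x) (hnn : ∀ x y, 0 ≤ c x y)
    (hdeg : ∀ x, 0 < deg c x)
    (v : Fin n → ℝ) (hv : ∀ x, 0 ≤ v x) :
    RightStochastic (rowNorm c ((pointMul v (rwMatrix c))ᵀ)) ∧
    Respects c (rowNorm c ((pointMul v (rwMatrix c))ᵀ)) ∧
    Matrix.vecMul (Matrix.vecMul v (rwMatrix c)) (rowNorm c ((pointMul v (rwMatrix c))ᵀ)) = v := by
  classical
  set N := (pointMul v (rwMatrix c))ᵀ with hN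
  have hNxy : ∀ x y, N x y = v y * (c y x / deg c y) := by
    intro x y; simp [hN, pointMul, rwMatrix, Matrix.transpose_apply]
  have hNnn : ∀ x y, 0 ≤ N x y := by
    intro x y
    rw [hNxy]
    exact mul_nonneg (hv y) (div_nonneg (hnn y x) (hdeg y).le)
  have hsnn : ∀ x, 0 ≤ ∑ z, N x z := fun x => Finset.sum_nonneg fun z _ => hNnn x z
  have hneigh : ∀ x, (Finset.univ.filter (fun z => 0 < c x z)).Nonempty := by
    intro x
    by_contra h
    rw [Finset.not_nonempty_iff_eq_empty, Finset.filter_eq_empty_iff] at h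
    have : deg c x = 0 :=
      Finset.sum_eq_zero fun z _ =>
        le_antisymm (not_lt.mp (h (Finset.mem_univ z))) (hnn x z)
    exact absurd this (hdeg x).ne'
  have hcardpos : ∀ x, (0:ℝ) < ((Finset.univ.filter (fun z => 0 < c x z)).card : ℝ) := by
    intro x
    exact_mod_cast Finset.card_pos.mpr (hneigh x)
  have hMnn : ∀ x y, 0 ≤ rowNorm c N x y := by
    intro x y
    simp only [rowNorm, Matrix.of_apply]
    split_ifs with h1 h2
    · exact div_nonneg (hNnn x y) (hsnn x)
    · positivity
    · exact le_rfl
  have hMsum : ∀ x, ∑ y, rowNorm c N x y = 1 := by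
    intro x
    simp only [rowNorm, Matrix.of_apply]
    by_cases h1 : (∑ z, N x z) = 0
    · simp only [h1, ne_eq, not_true_eq_false, if_false]
      rw [← Finset.sum_filter, Finset.sum_const, nsmul_eq_mul]
      field_simp
    · simp only [ne_eq, h1, not_false_eq_true, if_true, ← Finset.sum_div]
      exact div_self h1
  refine ⟨⟨hMnn, hMsum⟩, ?_, ?_⟩
  · intro x y hxy
    simp only [rowNorm, Matrix.of_apply] at hxy
    split_ifs at hxy with h1 h2
    · have : N x y ≠ 0 := fun h => hxy (by rw [h, zero_div])
      rw [hNxy] at this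
      have hc : c y x ≠ 0 := by
        intro h; apply this; rw [h]; simp
      rw [hsym]
      exact lt_of_le_of_ne (hnn y x) (Ne.symm hc)
    · exact h2
    · exact absurd rfl hxy
  · funext y
    have hwx : ∀ x, Matrix.vecMul v (rwMatrix c) x = ∑ z, N x z := by
      intro x
      simp [Matrix.vecMul, dotProduct, hNxy, rwMatrix]
    rw [Matrix.vecMul]
    simp only [dotProduct]
    have hterm : ∀ x, Matrix.vecMul v (rwMatrix c) x * rowNorm c N x y = N x y := by
      intro x
      rw [hwx]
      simp only [rowNorm, Matrix.of_apply]
      by_cases h1 : (∑ z, N x z) = 0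
      · have hNz : N x y = 0 := by
          have := (Finset.sum_eq_zero_iff_of_nonneg (fun z _ => hNnn x z)).mp h1
          exact this y (Finset.mem_univ y)
        simp [h1, hNz]
      · simp only [ne_eq, h1, not_false_eq_true, if_true]
        field_simp
      
    calc ∑ x, Matrix.vecMul v (rwMatrix c) x * rowNorm c N x y
        = ∑ x, N x y := Finset.sum_congr rfl fun x _ => hterm x
      _ = v y := by
          simp only [hNxy]
          rw [← Finset.mul_sum, ← Finset.sum_div, ← deg,
            div_self (hdeg y).ne', mul_one]
end

section
/- Let M^{(1)}, ..., M^{(2k)} be right stochastic matrices that respect an undirected graph G, and define v^{(0)} = e_i and v^{(s)} = v^{(s-1)} M^{(s)}. Suppose v^{(2k)} = e_j. Then the matrix r := Σ_{s=1}^{2k} [(v^{(s-1)} * M^{(s)}) − (v^{(s-1)} * M^{(s)})^T] is antisymmetric, respects G, and satisfies 1_n · r = e_j − e_i; i.e., r determines a unit flow on G from vertex i to vertex j. -/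
open Matrix

theorem stmt5 {n : ℕ} (c : Fin n → Fin n → ℝ)
    (hsym : ∀ x y, c x y = c y x)
    (k : ℕ) (i j : Fin n)
    (M : ℕ → Matrix (Fin n) (Fin n) ℝ)
    (hM : ∀ s, 1 ≤ s → s ≤ 2 * k → RightStochastic (M s) ∧ Respects c (M s))
    (v : ℕ → Fin n → ℝ)
    (hv0 : v 0 = (Pi.single i 1 : Fin n → ℝ))
    (hrec : ∀ s, 1 ≤ s → s ≤ 2 * k → v s = Matrix.vecMul (v (s - 1)) (M s))
    (hend : v (2 * k) = (Pi.single j 1 : Fin n → ℝ))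
    (r : Matrix (Fin n) (Fin n) ℝ)
    (hr : r = ∑ s ∈ Finset.Icc 1 (2 * k),
      (pointMul (v (s - 1)) (M s) - (pointMul (v (s - 1)) (M s))ᵀ)) :
    rᵀ = -r ∧ Respects c r ∧
      Matrix.vecMul (fun _ => (1 : ℝ)) r =
        (Pi.single j 1 : Fin n → ℝ) - (Pi.single i 1 : Fin n → ℝ) := by
  subst hr
  refine ⟨?_, ?_, ?_⟩
  · ext x y
    simp [Matrix.sum_apply, Matrix.transpose_apply, ← Finset.sum_neg_distrib]
  · intro x y hxy
    rw [Matrix.sum_apply] at hxy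
    obtain ⟨s, hs, hterm⟩ := Finset.exists_ne_zero_of_sum_ne_zero hxy
    simp only [Finset.mem_Icc] at hs
    have h2 := (hM s hs.1 hs.2).2
    simp only [Matrix.sub_apply, Matrix.transpose_apply, pointMul, Matrix.of_apply] at hterm
    by_cases h1 : M s x y ≠ 0
    · exact h2 x y h1
    · push_neg at h1
      have : M s y x ≠ 0 := by
        intro h0; apply hterm; rw [h0, h1]; ring
      rw [hsym]
      exact h2 y x this
  · funext y
    have key : ∀ s, 1 ≤ s → s ≤ 2 * k →
        Matrix.vecMul (fun _ => (1 : ℝ))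
          (pointMul (v (s - 1)) (M s) - (pointMul (v (s - 1)) (M s))ᵀ) y
          = v s y - v (s - 1) y := by
      intro s h1 h2
      have hrow := (hM s h1 h2).1.2
      have hvs := hrec s h1 h2
      simp only [Matrix.vecMul, dotProduct, Matrix.sub_apply,
        Matrix.transpose_apply, pointMul, Matrix.of_apply, one_mul,
        Finset.sum_sub_distrib] at *
      rw [hvs]
      simp [Matrix.vecMul, dotProduct, ← Finset.mul_sum, hrow y]
    have h1 : Matrix.vecMul (fun _ => (1 : ℝ))
        (∑ s ∈ Finset.Icc 1 (2 * k),
          (pointMul (v (s - 1)) (M s) - (pointMul (v (s - 1)) (M s))ᵀ)) y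
        = ∑ s ∈ Finset.Icc 1 (2 * k), (v s y - v (s - 1) y) := by
      simp only [Matrix.vecMul, dotProduct, Matrix.sum_apply, one_mul]
      rw [Finset.sum_comm]
      refine Finset.sum_congr rfl fun s hs => ?_
      simp only [Finset.mem_Icc] at hs
      have := key s hs.1 hs.2
      simpa [Matrix.vecMul, dotProduct] using this
    rw [h1]
    have tele : ∑ s ∈ Finset.Icc 1 (2 * k), (v s y - v (s - 1) y)
        = v (2 * k) y - v 0 y := by
      rw [show Finset.Icc 1 (2 * k) = (Finset.range (2 * k)).map
        ⟨Nat.succ, Nat.succ_injective⟩ from ?_]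
      · rw [Finset.sum_map]
        simpa using Finset.sum_range_sub (fun m => v m y) (2 * k)
      · ext m
        simp only [Finset.mem_map, Finset.mem_range, Finset.mem_Icc,
          Function.Embedding.coeFn_mk, Nat.succ_eq_add_one]
        constructor
        · rintro ⟨h1, h2⟩; exact ⟨m - 1, by omega, by omega⟩
        · rintro ⟨a, ha, rfl⟩; omega
    rw [tele, hend, hv0]
    simp
end

section
/- If CONG_D^{(s)}(x,y) ≤ 3·OPT(D) for all edges (x,y) and all time steps 1 ≤ s ≤ 2k, then the routing policy r defined by r_{ij} = Σ_{s=1}^{2k}[(v_{ij}^{(s-1)} * M_{ij}^{(s)}) − (v_{ij}^{(s-1)} * M_{ij}^{(s)})^T] satisfies CONG_{D,r}(x,y) ≤ 12k · OPT(D) for every edge (x,y). -/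
open Matrix

/-- If the sequential congestion is at most `3·OPT` at every step `1 ≤ s ≤ 2k`, then the
routing policy `r_ij = Σ_s [(v_ij^(s-1) * M_ij^(s)) − (v_ij^(s-1) * M_ij^(s))ᵀ]`
has congestion at most `12 k · OPT` on every edge. -/
theorem stmt9 {n : ℕ} (c : Fin n → Fin n → ℝ)
    (hsym : ∀ x y, c x y = c y x) (hnn : ∀ x y, 0 ≤ c x y)
    (k : ℕ)
    (D : Matrix (Fin n) (Fin n) ℝ) (hD : ∀ i j, 0 ≤ D i j)
    (v : Fin n → Fin n → ℕ → Fin n → ℝ) (hv : ∀ i j s x, 0 ≤ v i j s x)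
    (M : Fin n → Fin n → ℕ → Matrix (Fin n) (Fin n) ℝ)
    (hM : ∀ i j s x y, 0 ≤ M i j s x y)
    (OPT : ℝ)
    (hcong : ∀ x y : Fin n, 0 < c x y → ∀ s, 1 ≤ s → s ≤ 2 * k →
      (∑ i, ∑ j, D i j * pointMul (v i j (s - 1)) (M i j s) x y) / c x y ≤ 3 * OPT) :
    ∀ x y : Fin n, 0 < c x y →
      (∑ i, ∑ j, D i j *
          |(∑ s ∈ Finset.Icc 1 (2 * k),
            (pointMul (v i j (s - 1)) (M i j s) -
              (pointMul (v i j (s - 1)) (M i j s))ᵀ)) x y|) / c x y ≤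
        12 * k * OPT := by
  intro x y hc
  have hcyx : 0 < c y x := (hsym x y) ▸ hc
  rw [div_le_iff₀ hc]
  have hstep : ∀ s ∈ Finset.Icc 1 (2 * k),
      (∑ i, ∑ j, D i j * pointMul (v i j (s - 1)) (M i j s) x y) ≤ 3 * OPT * c x y := by
    intro s hs
    rw [Finset.mem_Icc] at hs
    have := hcong x y hc s hs.1 hs.2
    rwa [div_le_iff₀ hc] at this
  have hstep' : ∀ s ∈ Finset.Icc 1 (2 * k),
      (∑ i, ∑ j, D i j * pointMul (v i j (s - 1)) (M i j s) y x) ≤ 3 * OPT * c x y := by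
    intro s hs
    rw [Finset.mem_Icc] at hs
    have := hcong y x hcyx s hs.1 hs.2
    rw [div_le_iff₀ hcyx] at this
    rw [hsym x y]
    exact this
  have key : ∀ i j,
      |(∑ s ∈ Finset.Icc 1 (2 * k),
        (pointMul (v i j (s - 1)) (M i j s) -
          (pointMul (v i j (s - 1)) (M i j s))ᵀ)) x y| ≤
      ∑ s ∈ Finset.Icc 1 (2 * k),
        (pointMul (v i j (s - 1)) (M i j s) x y +
          pointMul (v i j (s - 1)) (M i j s) y x) := by
    intro i j
    rw [Matrix.sum_apply]
    refine (Finset.abs_sum_le_sum_abs _ _).trans (Finset.sum_le_sum fun s _ => ?_)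
    have h1 : 0 ≤ pointMul (v i j (s - 1)) (M i j s) x y :=
      mul_nonneg (hv i j _ x) (hM i j s x y)
    have h2 : 0 ≤ pointMul (v i j (s - 1)) (M i j s) y x :=
      mul_nonneg (hv i j _ y) (hM i j s y x)
    simp only [Matrix.sub_apply, Matrix.transpose_apply]
    calc |pointMul (v i j (s - 1)) (M i j s) x y - pointMul (v i j (s - 1)) (M i j s) y x|
        ≤ |pointMul (v i j (s - 1)) (M i j s) x y| + |pointMul (v i j (s - 1)) (M i j s) y x| :=
          abs_sub _ _
      _ = _ := by rw [abs_of_nonneg h1, abs_of_nonneg h2]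
  calc (∑ i, ∑ j, D i j *
          |(∑ s ∈ Finset.Icc 1 (2 * k),
            (pointMul (v i j (s - 1)) (M i j s) -
              (pointMul (v i j (s - 1)) (M i j s))ᵀ)) x y|)
      ≤ ∑ i, ∑ j, D i j * ∑ s ∈ Finset.Icc 1 (2 * k),
          (pointMul (v i j (s - 1)) (M i j s) x y +
            pointMul (v i j (s - 1)) (M i j s) y x) := by
        refine Finset.sum_le_sum fun i _ => Finset.sum_le_sum fun j _ => ?_
        exact mul_le_mul_of_nonneg_left (key i j) (hD i j)
    _ = ∑ s ∈ Finset.Icc 1 (2 * k),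
          ((∑ i, ∑ j, D i j * pointMul (v i j (s - 1)) (M i j s) x y) +
            (∑ i, ∑ j, D i j * pointMul (v i j (s - 1)) (M i j s) y x)) := by
        have swap3 : ∀ (f : Fin n → Fin n → ℕ → ℝ),
            (∑ i, ∑ j, ∑ s ∈ Finset.Icc 1 (2 * k), f i j s)
              = ∑ s ∈ Finset.Icc 1 (2 * k), ∑ i, ∑ j, f i j s := by
          intro f
          calc (∑ i, ∑ j, ∑ s ∈ Finset.Icc 1 (2 * k), f i j s)
              = ∑ i, ∑ s ∈ Finset.Icc 1 (2 * k), ∑ j, f i j s :=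
                Finset.sum_congr rfl fun i _ => Finset.sum_comm
            _ = ∑ s ∈ Finset.Icc 1 (2 * k), ∑ i, ∑ j, f i j s := Finset.sum_comm
        simp only [Finset.mul_sum, mul_add, Finset.sum_add_distrib]
        rw [swap3 (fun i j s => D i j * pointMul (v i j (s - 1)) (M i j s) x y),
          swap3 (fun i j s => D i j * pointMul (v i j (s - 1)) (M i j s) y x)]
    _ ≤ ∑ s ∈ Finset.Icc 1 (2 * k), (3 * OPT * c x y + 3 * OPT * c x y) := by
        exact Finset.sum_le_sum fun s hs => add_le_add (hstep s hs) (hstep' s hs)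
    _ = 12 * k * OPT * c x y := by
        rw [Finset.sum_const, Nat.card_Icc]
        push_cast
        ring
end
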